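/- The betweenness of the quasi-metric space Q(4) is exactly the set of four triples {(p,q,r), (r,p,q), (s,q,p), (q,p,s)}. -/

import Mathlib

/-- A quasi-metric on `V`: nonnegative, vanishing exactly on the diagonal,
and satisfying the (directed) triangle inequality. -/
def IsQuasiMetric {V : Type*} (d : V → V → ℝ) : Prop :=
  (∀ x y, 0 ≤ d x y) ∧ (∀ x y, d x y = 0 ↔ x = y) ∧ (∀ x y z, d x z ≤ d x y + d y z)

/-- Betweenness: `y` lies between `x` and `z` (all three pairwise distinct). -/
def BtwQM {V : Type*} (d : V → V → ℝ) (x y z : V) : Prop :=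
  x ≠ y ∧ y ≠ z ∧ x ≠ z ∧ d x z = d x y + d y z

/-- The line through `x` and `y`. -/
def lineQM {V : Type*} (d : V → V → ℝ) (x y : V) : Set V :=
  {z | d z y = d z x + d x y ∨ d x y = d x z + d z y ∨ d x z = d x y + d y z}

/-- The set of all lines of the space. -/
def linesQM {V : Type*} (d : V → V → ℝ) : Set (Set V) :=
  {ℓ | ∃ x y, x ≠ y ∧ ℓ = lineQM d x y}

/-- The four points of the space `Q(4)`. -/
inductive P4 : Type
  | p | s | q | r
deriving DecidableEq

open P4

/-- The quasi-metric of the space `Q(4)`. -/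
def dQ4 : P4 → P4 → ℝ
  | p, p => 0 | p, s => 1 | p, q => 1 | p, r => 3
  | s, p => 3 | s, s => 0 | s, q => 2 | s, r => 3
  | q, p => 1 | q, s => 2 | q, q => 0 | q, r => 2
  | r, p => 1 | r, s => 1 | r, q => 2 | r, r => 0

/-- The betweenness of `Q(4)`. -/
def BQ4 : Set (P4 × P4 × P4) := {(p, q, r), (r, p, q), (s, q, p), (q, p, s)}

/-- the betweenness of `Q(4)` is exactly
`{(p,q,r), (r,p,q), (s,q,p), (q,p,s)}`. -/
theorem stmt_1 :
    {t : P4 × P4 × P4 | BtwQM dQ4 t.1 t.2.1 t.2.2} = BQ4 := by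
  ext ⟨x, y, z⟩
  cases x <;> cases y <;> cases z <;> simp [BtwQM, dQ4, BQ4] <;> norm_num
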